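/- There exists a constant c > 0 such that for all sufficiently large n and every integer r with 1 ≤ r ≤ c·log n, one has log Σ_{k=0}^{2⌈σ̃_{n,r} N⌉} C(2^n(n+1), k) ≥ C(n,r), where N = C(n,r) and σ̃_{n,r} = ln(r(n−r)+1)/(r(n−r+1)) + 1/((r+1)(n−r+1)). -/

import Mathlib

open Filter
open scoped symmDiff

variable {α : Type*}

/-- The rank of a matroid: the common cardinality of its bases. -/
noncomputable def Matroid.rnk (M : Matroid α) : ℕ :=
  sSup {k | ∃ B, M.IsBase B ∧ B.ncard = k}

/-- The rank function of a matroid. -/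
noncomputable def Matroid.rkFun (M : Matroid α) (X : Set α) : ℕ :=
  sSup {k | ∃ I, I ⊆ X ∧ M.Indep I ∧ I.ncard = k}

/-- A circuit: a minimal dependent set. -/
def Matroid.IsCircuitSet (M : Matroid α) (C : Set α) : Prop :=
  M.Dep C ∧ ∀ D ⊂ C, M.Indep D

/-- A cocircuit: a circuit of the dual. -/
def Matroid.IsCocircuitSet (M : Matroid α) (D : Set α) : Prop :=
  M✶.IsCircuitSet D

/-- A matroid is paving if every circuit has cardinality at least the rank. -/
def Matroid.Paving (M : Matroid α) : Prop :=
  ∀ C, M.IsCircuitSet C → M.rnk ≤ C.ncard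

/-- Sparse paving: both the matroid and its dual are paving. -/
def Matroid.SparsePaving (M : Matroid α) : Prop :=
  M.Paving ∧ M✶.Paving

/-- A matroid has no loops iff every singleton of the ground set is independent. -/
def Matroid.LoopFree (M : Matroid α) : Prop :=
  ∀ e ∈ M.E, M.Indep {e}

/-- A matroid has no coloops iff its dual has no loops. -/
def Matroid.ColoopFree (M : Matroid α) : Prop :=
  M✶.LoopFree

/-- A flat: a set whose rank increases upon adding any element of the ground set outside it. -/
def Matroid.IsFlatSet (M : Matroid α) (F : Set α) : Prop :=
  F ⊆ M.E ∧ ∀ e ∈ M.E \ F, M.rkFun F < M.rkFun (F ∪ {e})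

/-- The number of matroids on ground set `{1, …, n}`. -/
noncomputable def numMatroids (n : ℕ) : ℕ :=
  Nat.card {M : Matroid (Fin n) // M.E = Set.univ}

/-- The number of sparse paving matroids on ground set `{1, …, n}`. -/
noncomputable def numSparsePaving (n : ℕ) : ℕ :=
  Nat.card {M : Matroid (Fin n) // M.E = Set.univ ∧ M.SparsePaving}

/-- The number of loopless, coloopless matroids on ground set `{1, …, n}`. -/
noncomputable def numMatroidsNoLoopColoop (n : ℕ) : ℕ :=
  Nat.card {M : Matroid (Fin n) // M.E = Set.univ ∧ M.LoopFree ∧ M.ColoopFree}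

/-- Number of rank-`r` loopless, coloopless matroids on `{1, …, n}`. -/
noncomputable def numMatroidsNoLoopColoopRk (n r : ℕ) : ℕ :=
  Nat.card {M : Matroid (Fin n) // M.E = Set.univ ∧ M.rnk = r ∧ M.LoopFree ∧ M.ColoopFree}

/-- Number of rank-`r` sparse paving matroids on `{1, …, n}`. -/
noncomputable def numSparsePavingRk (n r : ℕ) : ℕ :=
  Nat.card {M : Matroid (Fin n) // M.E = Set.univ ∧ M.rnk = r ∧ M.SparsePaving}

/-- The Johnson graph `J(E, r)` on the `r`-element subsets of a type. -/
def johnsonGraph (α : Type*) [DecidableEq α] (r : ℕ) :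
    SimpleGraph {X : Finset α // X.card = r} where
  Adj X Y := (X.1 ∆ Y.1).card = 2
  symm := by constructor; intro X Y h; rwa [symmDiff_comm]
  loopless := by constructor; intro X h; simp [symmDiff_self] at h

/-- A stable (independent) set of vertices in a graph. -/
def SimpleGraph.IsStableSet {V : Type*} (G : SimpleGraph V) (s : Set V) : Prop :=
  ∀ ⦃x⦄, x ∈ s → ∀ ⦃y⦄, y ∈ s → ¬ G.Adj x y

/-- The number of stable sets of a graph. -/
noncomputable def numStableSets {V : Type*} (G : SimpleGraph V) : ℕ :=
  Nat.card {s : Set V // G.IsStableSet s}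

/-! For `M = 2^n (n + 1)` and `m = 2⌈σ̃ N⌉` the sum is at least `C(M, m) ≥ ((M + 1 - m) / m)^m`.
When `r ≤ (log n) / 2` one has `σ̃ ≥ 2 / n`, so `m ≥ 4N / n`; and `σ̃ ≤ 2` gives
`m ≤ 4N ≤ 4 n^r`, which is at most `2^(n/2) / 2` for large `n`. Hence
`log₂ C(M, m) ≥ m · ⌊n/2⌋ ≥ N`. -/

open Real Finset

/-- The paper's `σ̃_{n,r}`. -/
noncomputable def sigmaTilde (n r : ℝ) : ℝ :=
  log (r * (n - r) + 1) / (r * (n - r + 1)) + 1 / ((r + 1) * (n - r + 1))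

theorem two_pow_mul_le_sum_choose {m t M : ℕ} (h : m * 2 ^ t + m ≤ M + 1) :
    2 ^ (t * m) ≤ ∑ k ∈ range (m + 1), M.choose k := by
  have hchoose : m ^ m * 2 ^ (t * m) ≤ m ^ m * M.choose m :=
    calc m ^ m * 2 ^ (t * m) = (m * 2 ^ t) ^ m := by rw [mul_pow, ← pow_mul, mul_comm t]
      _ ≤ (M + 1 - m) ^ m := Nat.pow_le_pow_left (by omega) m
      _ ≤ M.descFactorial m := Nat.pow_sub_le_descFactorial M m
      _ = m.factorial * M.choose m := Nat.descFactorial_eq_factorial_mul_choose M m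
      _ ≤ m ^ m * M.choose m := Nat.mul_le_mul_right _ (Nat.factorial_le_pow m)
  calc 2 ^ (t * m) ≤ M.choose m := Nat.le_of_mul_le_mul_left hchoose Nat.pow_self_pos
    _ ≤ ∑ k ∈ range (m + 1), M.choose k :=
      single_le_sum (fun _ _ => Nat.zero_le _) (self_mem_range_succ m)

theorem le_logb_sum_choose {N m t M : ℕ} (hN : N ≤ t * m) (h : m * 2 ^ t + m ≤ M + 1) :
    (N : ℝ) ≤ logb 2 (∑ k ∈ range (m + 1), (M.choose k : ℝ)) := by
  have hsum : ((2 ^ (t * m) : ℕ) : ℝ) ≤ ∑ k ∈ range (m + 1), (M.choose k : ℝ) := by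
    exact_mod_cast two_pow_mul_le_sum_choose h
  calc (N : ℝ) ≤ ((t * m : ℕ) : ℝ) := by exact_mod_cast hN
    _ = logb 2 ((2 ^ (t * m) : ℕ) : ℝ) := by
      rw [Nat.cast_pow, Nat.cast_ofNat, logb_pow, logb_self_eq_one one_lt_two, mul_one]
    _ ≤ logb 2 (∑ k ∈ range (m + 1), (M.choose k : ℝ)) :=
      logb_le_logb_of_le one_lt_two (by positivity) hsum

theorem sigmaTilde_le_two {n r : ℝ} (hr : 1 ≤ r) (hrn : r ≤ n) : sigmaTilde n r ≤ 2 := by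
  have hlog : log (r * (n - r) + 1) ≤ r * (n - r) :=
    (log_le_sub_one_of_pos (by nlinarith)).trans_eq (by ring)
  have hfirst : log (r * (n - r) + 1) / (r * (n - r + 1)) ≤ 1 :=
    div_le_one_of_le₀ (by nlinarith) (by nlinarith)
  have hsecond : 1 / ((r + 1) * (n - r + 1)) ≤ 1 :=
    div_le_one_of_le₀ (by nlinarith) (by nlinarith)
  unfold sigmaTilde
  linarith

/-- With `u = n - r + 1`, the first term of `σ̃` is at least `log u / (r u)`, and `log u / u`
decreases on `[e, ∞)`. -/
theorem log_div_mul_le_sigmaTilde {n r : ℝ} (hr : 1 ≤ r) (hrn : r + 2 ≤ n) :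
    log n / (r * n) ≤ sigmaTilde n r := by
  set u := n - r + 1
  have hu : exp 1 ≤ u := by linarith [exp_one_lt_three]
  have hu0 : 0 < u := (exp_pos 1).trans_le hu
  have hdecay : log n / n ≤ log u / u :=
    log_div_self_antitoneOn hu (hu.trans (by linarith : u ≤ n)) (by linarith)
  have hmono : log u ≤ log (r * (n - r) + 1) := log_le_log hu0 (by nlinarith)
  have hsecond : 0 ≤ 1 / ((r + 1) * (n - r + 1)) := by positivity
  calc log n / (r * n) = (log n / n) / r := by rw [div_div, mul_comm]
    _ ≤ (log u / u) / r := div_le_div_of_nonneg_right hdecay (by linarith)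
    _ ≤ log (r * (n - r) + 1) / (r * u) := by
      rw [div_div, mul_comm u]
      exact div_le_div_of_nonneg_right hmono (by positivity)
    _ ≤ sigmaTilde n r := le_add_of_nonneg_right hsecond

/-- `(log n)² = o(n)`, so `8 n^r ≤ 8 exp ((log n)² / 2)` is eventually below `2^(n/2)`. -/
theorem eventually_eight_mul_pow_le_two_pow :
    ∀ᶠ n : ℕ in atTop, ∀ r : ℕ, (r : ℝ) ≤ log n / 2 → 8 * n ^ r ≤ 2 ^ (n / 2) := by
  have hsq : ∀ᶠ x : ℝ in atTop, log x ^ 2 ≤ x / 4 := by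
    filter_upwards [(isLittleO_pow_log_id_atTop (n := 2)).bound (by norm_num : (0 : ℝ) < 1 / 4),
      eventually_ge_atTop 0] with x hx hx0
    rw [Real.norm_of_nonneg (by positivity), id, Real.norm_of_nonneg hx0] at hx
    linarith
  filter_upwards [tendsto_natCast_atTop_atTop.eventually hsq, eventually_ge_atTop 14]
    with n hn hn14 r hr
  have hn14' : (14 : ℝ) ≤ n := by exact_mod_cast hn14
  have hlogn : 0 ≤ log n := log_nonneg (by linarith)
  have hhalf : (n : ℝ) ≤ 2 * (n / 2 : ℕ) + 1 := by exact_mod_cast (by omega : n ≤ 2 * (n / 2) + 1)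
  have hlog2 := log_two_gt_d9
  suffices log ((8 * n ^ r : ℕ) : ℝ) ≤ log ((2 ^ (n / 2) : ℕ) : ℝ) by
    exact_mod_cast (log_le_log_iff (by positivity) (by positivity)).1 this
  have hlog8 : log 8 = 3 * log 2 := by
    rw [show (8 : ℝ) = 2 ^ 3 by norm_num, log_pow]; norm_num
  have hrlogn : r * log n ≤ log n ^ 2 / 2 := by nlinarith [mul_le_mul_of_nonneg_right hr hlogn]
  have ht : (3 : ℝ) ≤ (n / 2 : ℕ) := by exact_mod_cast (by omega : 3 ≤ n / 2)
  push_cast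
  rw [log_mul (by norm_num) (by positivity), log_pow, log_pow, hlog8]
  have := mul_le_mul_of_nonneg_left hlog2.le (by linarith : (0 : ℝ) ≤ (n / 2 : ℕ) - 3)
  linarith

theorem choose_le_logb_sum_choose {n r : ℕ} (hn : 3 ≤ n) (hr : 1 ≤ r)
    (hrlog : (r : ℝ) ≤ log n / 2) (hpow : 8 * n ^ r ≤ 2 ^ (n / 2)) :
    (n.choose r : ℝ) ≤ logb 2 (∑ k ∈ range (2 * ⌈sigmaTilde n r * n.choose r⌉₊ + 1),
      ((2 ^ n * (n + 1)).choose k : ℝ)) := by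
  set N := n.choose r
  set j := ⌈sigmaTilde n r * N⌉₊
  have hn' : (3 : ℝ) ≤ n := by exact_mod_cast hn
  have hr' : (1 : ℝ) ≤ r := by exact_mod_cast hr
  have hrn : (r : ℝ) + 2 ≤ n := by linarith [log_le_sub_one_of_pos (by positivity : (0 : ℝ) < n)]
  apply le_logb_sum_choose (t := n / 2)
  · have hsigma : 2 / n ≤ sigmaTilde n r := by
      refine le_trans ?_ (log_div_mul_le_sigmaTilde hr' hrn)
      rw [div_le_div_iff₀ (by positivity) (by positivity)]
      nlinarith
    have hj : sigmaTilde n r * N ≤ j := Nat.le_ceil _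
    have hj' : 2 * N ≤ n * j := by
      have := mul_le_mul_of_nonneg_right hsigma (Nat.cast_nonneg (α := ℝ) N)
      rw [div_mul_eq_mul_div, div_le_iff₀ (by positivity)] at this
      exact_mod_cast (by nlinarith [mul_le_mul_of_nonneg_right hj (Nat.cast_nonneg (α := ℝ) n)] :
        (2 * N : ℝ) ≤ n * j)
    have hhalf : n ≤ 2 * (n / 2) + 1 := by omega
    nlinarith [Nat.mul_le_mul_right j hhalf, Nat.mul_le_mul_right j (by omega : 1 ≤ n / 2)]
  · have hj4 : j ≤ 2 * N := by
      refine Nat.ceil_le.2 ?_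
      push_cast
      nlinarith [sigmaTilde_le_two hr' (by linarith : (r : ℝ) ≤ n),
        (Nat.cast_nonneg N : (0 : ℝ) ≤ N)]
    have hN : N ≤ n ^ r := Nat.choose_le_pow n r
    calc 2 * j * 2 ^ (n / 2) + 2 * j ≤ 4 * j * 2 ^ (n / 2) := by
          nlinarith [Nat.one_le_two_pow (n := n / 2)]
      _ ≤ 8 * n ^ r * 2 ^ (n / 2) := Nat.mul_le_mul_right _ (by omega)
      _ ≤ 2 ^ (n / 2) * 2 ^ (n / 2) := by gcongr
      _ ≤ 2 ^ n * (n + 1) + 1 := by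
        rw [← pow_add]
        exact (Nat.pow_le_pow_right two_pos (by omega)).trans
          ((Nat.le_mul_of_pos_right _ n.succ_pos).trans (Nat.le_succ _))

/-- for small `r` (at most `c log n`), the flat-cover count term alone
is at least `C(n,r)` in the logarithm. -/
theorem log_sum_choose_ge_choose :
    ∃ c : ℝ, 0 < c ∧ ∀ᶠ n : ℕ in Filter.atTop, ∀ r : ℕ, 1 ≤ r → (r : ℝ) ≤ c * Real.logb 2 n →
      (n.choose r : ℝ) ≤
        Real.logb 2
          (∑ k ∈ Finset.range
              (2 * ⌈(Real.log ((r : ℝ) * ((n : ℝ) - r) + 1) / ((r : ℝ) * ((n : ℝ) - r + 1)) +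
                      1 / (((r : ℝ) + 1) * ((n : ℝ) - r + 1))) * (n.choose r : ℝ)⌉₊ + 1),
            ((2 ^ n * (n + 1)).choose k : ℝ)) := by
  refine ⟨1 / 4, by norm_num, ?_⟩
  filter_upwards [eventually_ge_atTop 3, eventually_eight_mul_pow_le_two_pow]
    with n hn hpow r hr hrc
  have hrlog : (r : ℝ) ≤ log n / 2 := by
    rw [logb, mul_div_assoc', le_div_iff₀ (log_pos one_lt_two)] at hrc
    nlinarith [mul_le_mul_of_nonneg_left log_two_gt_d9.le (Nat.cast_nonneg (α := ℝ) r)]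
  exact choose_le_logb_sum_choose hn hr hrlog (hpow r hrlog)
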